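/- Let Δ be a 2-disk contained in a closed Riemannian surface N of intrinsic diameter D. Then the intrinsic diameter of Δ satisfies diam(Δ) ≤ D + ℓ(∂Δ)/2, where ℓ(∂Δ) is the length of the boundary of Δ. -/

import Mathlib

open Set Metric Filter Topology
open scoped Manifold ENNReal

noncomputable section

namespace OGC

variable {X : Type*} [MetricSpace X]

/-- The length of a curve `γ`, viewed as parameterized on `[0,1]`. -/
def curveLen (γ : ℝ → X) : ℝ≥0∞ := eVariationOn γ (Set.Icc 0 1)

/-- A (rectifiable-parameterized) curve: a map continuous on `[0,1]`. -/
def IsCurve (γ : ℝ → X) : Prop := ContinuousOn γ (Set.Icc 0 1)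

/-- The reverse of a curve. -/
def rev (γ : ℝ → X) : ℝ → X := fun t => γ (1 - t)

/-- Concatenation of two curves. -/
def concat (f g : ℝ → X) : ℝ → X := fun t => if t ≤ 1 / 2 then f (2 * t) else g (2 * t - 1)

/-- `H` is a homotopy (parameterized on the unit square) from the curve `γ` to the curve `β`. -/
def IsHomotopy (H : ℝ → ℝ → X) (γ β : ℝ → X) : Prop :=
  ContinuousOn (fun q : ℝ × ℝ => H q.1 q.2) (Set.Icc 0 1 ×ˢ Set.Icc 0 1) ∧
  (∀ t ∈ Set.Icc (0:ℝ) 1, H 0 t = γ t) ∧ (∀ t ∈ Set.Icc (0:ℝ) 1, H 1 t = β t)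

/-- The homotopy `H` keeps the initial point at `p` and the terminal point at `q` throughout. -/
def FixesEndpoints (H : ℝ → ℝ → X) (p q : X) : Prop :=
  ∀ s ∈ Set.Icc (0:ℝ) 1, H s 0 = p ∧ H s 1 = q

/-- Every curve of the homotopy `H` has length at most `c`. -/
def LengthBound (H : ℝ → ℝ → X) (c : ℝ) : Prop :=
  ∀ s ∈ Set.Icc (0:ℝ) 1, curveLen (H s) ≤ ENNReal.ofReal c

/-- `γ` and `β` are homotopic as loops based at `p`, through loops based at `p`
of length at most `c`. -/
def BasedLoopHomotopic (p : X) (γ β : ℝ → X) (c : ℝ) : Prop :=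
  ∃ H, IsHomotopy H γ β ∧ FixesEndpoints H p p ∧ LengthBound H c

/-- `γ` and `β` are path homotopic (with fixed endpoints `p`, `q`) through paths
of length at most `c`. -/
def PathHomotopic (p q : X) (γ β : ℝ → X) (c : ℝ) : Prop :=
  ∃ H, IsHomotopy H γ β ∧ FixesEndpoints H p q ∧ LengthBound H c

/-- The effective loop shortening property of the subset `V` of the ambient space `X`,
restricted to basepoints in `K`, with parameters `c`, `a` and `k`:  `a` bounds the
extrinsic diameter of `V`, `k ≥ 1`, and for all sufficiently small `δ > 0`, every loop
in `V` based at a point of `K` of length at most `2ak + δ` can be homotoped in `X`, with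
fixed basepoint and through loops of length at most `c`, to a loop of length at
most `(2k-2)a`. -/
def ELSPRestrictedTo (V K : Set X) (c a k : ℝ) : Prop :=
  (∀ x ∈ V, ∀ y ∈ V, dist x y ≤ a) ∧ 1 ≤ k ∧
  ∃ δ₀ > (0:ℝ), ∀ δ : ℝ, 0 < δ → δ ≤ δ₀ →
    ∀ γ : ℝ → X, IsCurve γ → (∀ t ∈ Set.Icc (0:ℝ) 1, γ t ∈ V) →
      γ 0 ∈ K → γ 1 = γ 0 →
      curveLen γ ≤ ENNReal.ofReal (2 * a * k + δ) →
      ∃ β : ℝ → X, IsCurve β ∧ β 0 = γ 0 ∧ β 1 = γ 0 ∧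
        curveLen β ≤ ENNReal.ofReal ((2 * k - 2) * a) ∧
        BasedLoopHomotopic (γ 0) γ β c

/-- The effective loop shortening property (with unrestricted basepoints in `V`). -/
def ELSP (V : Set X) (c a k : ℝ) : Prop := ELSPRestrictedTo V V c a k

/-- `γ : [0, L] → X` is a unit-speed local geodesic. -/
def IsUnitSpeedGeodesic (γ : ℝ → X) (L : ℝ) : Prop :=
  ∀ t ∈ Set.Icc 0 L, ∃ ε > (0:ℝ),
    ∀ s ∈ Set.Icc 0 L ∩ Set.Icc (t - ε) (t + ε),
      ∀ u ∈ Set.Icc 0 L ∩ Set.Icc (t - ε) (t + ε), dist (γ s) (γ u) = |s - u|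

/-- Metric (first-variation) formulation of the fact that the unit-speed curve `γ`
leaves `N` orthogonally at `γ 0`: the distance to `N` grows at unit rate. -/
def MeetsOrthogonally (γ : ℝ → X) (N : Set X) : Prop :=
  Filter.Tendsto (fun t => Metric.infDist (γ t) N / t) (nhdsWithin 0 (Set.Ioi 0)) (nhds 1)

/-- `γ : [0, L] → X` is a nonconstant (unit-speed) geodesic chord with endpoints on `N`,
meeting `N` orthogonally at both endpoints; its length is `L`. -/
def IsOrthogonalGeodesicChord (N : Set X) (γ : ℝ → X) (L : ℝ) : Prop :=
  0 < L ∧ γ 0 ∈ N ∧ γ L ∈ N ∧ IsUnitSpeedGeodesic γ L ∧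
  MeetsOrthogonally γ N ∧ MeetsOrthogonally (fun t => γ (L - t)) N

/-- `N` is a (strong) deformation retract of `M`: there is a retraction of `M` onto `N`
homotopic to the identity relative to `N`. -/
def IsDeformationRetractRel {M : Type*} [TopologicalSpace M] (N : Set M) : Prop :=
  ∃ r : C(M, M), (∀ x, r x ∈ N) ∧ (∀ x ∈ N, r x = x) ∧
    (ContinuousMap.id M).HomotopicRel r N

/-- `N` is a deformation retract of `M`: there is a retraction of `M` onto `N`
homotopic to the identity. -/
def IsDeformationRetract {M : Type*} [TopologicalSpace M] (N : Set M) : Prop :=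
  ∃ r : C(M, M), (∀ x, r x ∈ N) ∧ (∀ x ∈ N, r x = x) ∧
    (ContinuousMap.id M).Homotopic r

/-- The inclusion of `N` into `M` is a homotopy equivalence. -/
def InclusionIsHomotopyEquiv {M : Type*} [TopologicalSpace M] (N : Set M) : Prop :=
  ∃ e : ContinuousMap.HomotopyEquiv N M, ⇑e.toFun = (Subtype.val : N → M)

/-- Nontriviality of the relative homotopy group `π_i(M, N)`: there is a map of the
`i`-disk into `M` taking the boundary sphere into `N` that is not homotopic, relative
to the boundary sphere, to a map with image in `N` (compression criterion). -/
def RelHomotopyNontrivial {M : Type*} [TopologicalSpace M] (N : Set M) (i : ℕ) : Prop :=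
  ∃ f : C(Metric.closedBall (0 : EuclideanSpace ℝ (Fin i)) 1, M),
    (∀ x : Metric.closedBall (0 : EuclideanSpace ℝ (Fin i)) 1,
        ‖(x : EuclideanSpace ℝ (Fin i))‖ = 1 → f x ∈ N) ∧
    ¬ ∃ g : C(Metric.closedBall (0 : EuclideanSpace ℝ (Fin i)) 1, M),
        (∀ x, g x ∈ N) ∧
        f.HomotopicRel g {x | ‖(x : EuclideanSpace ℝ (Fin i))‖ = 1}

end OGC

/-!
Join `x, y ∈ Δ` by a curve `γ` of length `≤ D` in `N`. If `γ` leaves `Δ`, let `a` be the first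
time it meets `∂Δ` before leaving and `b` the last time it meets `∂Δ` after returning. One of the
two arcs of the boundary loop `σ` from `γ a` to `γ b` has length `≤ ℓ/2`; replacing `γ` on
`[a, b]` by that arc gives a curve in `Δ` of length `≤ D + ℓ/2`.

Since `ENNReal.ofReal` truncates, `ℓ < 0` is excluded only geometrically: `σ` would be constant,
making `∂Δ` a single point, which is impossible for a disk in a surface.
-/

theorem IsPreconnected.inter_frontier_nonempty {α : Type*} [TopologicalSpace α] {s t : Set α}
    (ht : IsPreconnected t) (hin : (t ∩ s).Nonempty) (hout : (t \ s).Nonempty) :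
    (t ∩ frontier s).Nonempty := by
  by_contra hfr
  rw [not_nonempty_iff_eq_empty, ← disjoint_iff_inter_eq_empty] at hfr
  have hcover : t ⊆ interior s ∪ (closure s)ᶜ := fun x hx => by
    by_contra h
    simp only [mem_union, mem_compl_iff, not_or, not_not] at h
    exact hfr.notMem_of_mem_left hx ⟨h.2, h.1⟩
  obtain ⟨x, -, hxs, hxs'⟩ := ht _ _ isOpen_interior isClosed_closure.isOpen_compl hcover
    (hin.mono fun x hx => ⟨hx.1, (hcover hx.1).resolve_right (not_not.2 (subset_closure hx.2))⟩)
    (hout.mono fun x hx => ⟨hx.1, (hcover hx.1).resolve_left fun h => hx.2 (interior_subset h)⟩)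
  exact hxs' (subset_closure (interior_subset hxs))

theorem exists_mem_frontier_of_continuousOn {Y : Type*} [TopologicalSpace Y] {f : ℝ → Y}
    {Δ : Set Y} {c d : ℝ} (hcd : c ≤ d) (hf : ContinuousOn f (Icc c d)) (hc : f c ∈ Δ)
    (hd : f d ∉ Δ) : ∃ t ∈ Icc c d, f t ∈ frontier Δ := by
  obtain ⟨_, ⟨t, ht, rfl⟩, hfr⟩ := (isPreconnected_Icc.image f hf).inter_frontier_nonempty
    ⟨f c, mem_image_of_mem f (left_mem_Icc.2 hcd), hc⟩
    ⟨f d, mem_image_of_mem f (right_mem_Icc.2 hcd), hd⟩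
  exact ⟨t, ht, hfr⟩

theorem isConnected_ball_diff_singleton {E : Type*} [NormedAddCommGroup E] [NormedSpace ℝ E]
    (hE : 1 < Module.rank ℝ E) (c : E) {r : ℝ} (hr : 0 < r) : IsConnected (ball c r \ {c}) := by
  set φ := OpenPartialHomeomorph.univBall c r
  have hinj : Function.Injective φ :=
    injOn_univ.1 (OpenPartialHomeomorph.univBall_source c r ▸ φ.injOn)
  have himage : φ '' {0}ᶜ = ball c r \ {c} := by
    rw [image_compl_eq_range_sdiff_image hinj, image_singleton,
      OpenPartialHomeomorph.univBall_apply_zero, ← image_univ,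
      ← OpenPartialHomeomorph.univBall_source c r, φ.image_source_eq_target,
      OpenPartialHomeomorph.univBall_target c hr]
  rw [← himage]
  exact (isConnected_compl_singleton_of_one_lt_rank hE 0).image _
    (OpenPartialHomeomorph.continuous_univBall c r).continuousOn

section Manifold

variable {E M : Type*} [NormedAddCommGroup E] [NormedSpace ℝ E] [TopologicalSpace M]
  [ChartedSpace E M]

theorem ChartedSpace.exists_isOpen_isPreconnected_diff_singleton (hE : 1 < Module.rank ℝ E)
    (p : M) : ∃ U : Set M, IsOpen U ∧ p ∈ U ∧ IsPreconnected (U \ {p}) := by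
  set φ := chartAt E p
  obtain ⟨r, hr, hball⟩ := Metric.isOpen_iff.1 φ.open_target (φ p) (mem_chart_target E p)
  have hφp : φ.symm (φ p) = p := φ.left_inv (mem_chart_source E p)
  refine ⟨φ.symm '' ball (φ p) r, φ.isOpen_image_symm_of_subset_target isOpen_ball hball,
    ⟨φ p, mem_ball_self hr, hφp⟩, ?_⟩
  have himage : φ.symm '' ball (φ p) r \ {p} = φ.symm '' (ball (φ p) r \ {φ p}) := by
    rw [(φ.symm.injOn.mono hball).image_sdiff_subset (singleton_subset_iff.2 (mem_ball_self hr)),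
      image_singleton, hφp]
  rw [himage]
  exact (isConnected_ball_diff_singleton hE _ hr).isPreconnected.image _
    (φ.continuousOn_symm.mono (sdiff_subset.trans hball))

theorem frontier_ne_singleton (hE : 1 < Module.rank ℝ E) {Δ : Set M} (hΔ : IsClosed Δ)
    (hconn : IsPreconnected Δ) (hnt : Δ.Nontrivial) (p : M) : frontier Δ ≠ {p} := by
  have := ChartedSpace.t1Space E M
  intro hfr
  have hp : p ∈ frontier Δ := hfr ▸ mem_singleton p
  have hpΔ : p ∈ Δ := hΔ.frontier_subset hp
  obtain ⟨U, hU, hpU, hUconn⟩ := ChartedSpace.exists_isOpen_isPreconnected_diff_singleton hE p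
  -- `U \ {p}` is connected and meets both `Δ` and its complement, yet misses `frontier Δ = {p}`.
  have hin : ((U \ {p}) ∩ Δ).Nonempty := by
    obtain ⟨q, hqΔ, hqp⟩ := hnt.exists_ne p
    have hcover : Δ ⊆ U ∪ {p}ᶜ := fun x _ => by
      by_cases h : x = p
      exacts [Or.inl (h ▸ hpU), Or.inr h]
    obtain ⟨x, hxΔ, hxU, hxp⟩ :=
      hconn U {p}ᶜ hU isOpen_compl_singleton hcover ⟨p, hpΔ, hpU⟩ ⟨q, hqΔ, hqp⟩
    exact ⟨x, ⟨hxU, hxp⟩, hxΔ⟩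
  have hout : ((U \ {p}) \ Δ).Nonempty := by
    obtain ⟨x, hxU, hxΔ⟩ :=
      mem_closure_iff.1 (frontier_subset_closure (frontier_compl Δ ▸ hp)) U hU hpU
    exact ⟨x, ⟨hxU, fun h => hxΔ ((mem_singleton_iff.1 h) ▸ hpΔ)⟩, hxΔ⟩
  obtain ⟨x, hx, hxfr⟩ := hUconn.inter_frontier_nonempty hin hout
  exact hx.2 (hfr ▸ hxfr)

end Manifold

section Disk

variable {Y E : Type*} [TopologicalSpace Y] [NormedAddCommGroup E] [NormedSpace ℝ E] {Δ : Set Y}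
  {c : E} {r : ℝ}

theorem isPreconnected_of_homeomorph_closedBall (e : Δ ≃ₜ closedBall c r) :
    IsPreconnected Δ := by
  have := isPreconnected_iff_preconnectedSpace.1 (isPreconnected_closedBall (x := c) (r := r))
  exact isPreconnected_iff_preconnectedSpace.2
    (e.symm.surjective.denseRange.preconnectedSpace e.symm.continuous)

theorem nontrivial_of_homeomorph_closedBall [Nontrivial E] (hr : 0 < r)
    (e : Δ ≃ₜ closedBall c r) : Δ.Nontrivial := by
  have := nontrivial_coe_sort.2 (infinite_of_mem_nhds c (closedBall_mem_nhds c hr)).nontrivial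
  exact nontrivial_coe_sort.1 e.toEquiv.nontrivial

end Disk

namespace OGC

theorem eVariationOn_Icc_add_Icc {α E : Type*} [LinearOrder α] [PseudoEMetricSpace E]
    (f : α → E) {a b c : α} (hab : a ≤ b) (hbc : b ≤ c) :
    eVariationOn f (Icc a b) + eVariationOn f (Icc b c) = eVariationOn f (Icc a c) := by
  rw [← eVariationOn.union f (isGreatest_Icc hab) (isLeast_Icc hbc),
    Icc_union_Icc_eq_Icc hab hbc]

theorem image_lineMap_Icc (c d : ℝ) : AffineMap.lineMap c d '' Icc (0 : ℝ) 1 = uIcc c d := by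
  rw [← segment_eq_image_lineMap, segment_eq_uIcc]

variable {X : Type*}

def subpath (γ : ℝ → X) (c d : ℝ) : ℝ → X := γ ∘ AffineMap.lineMap c d

@[simp] theorem subpath_zero (γ : ℝ → X) (c d : ℝ) : subpath γ c d 0 = γ c := by
  simp [subpath]

@[simp] theorem subpath_one (γ : ℝ → X) (c d : ℝ) : subpath γ c d 1 = γ d := by
  simp [subpath]

theorem image_subpath (γ : ℝ → X) (c d : ℝ) : subpath γ c d '' Icc 0 1 = γ '' uIcc c d := by
  rw [subpath, image_comp, image_lineMap_Icc]

theorem mapsTo_subpath (γ : ℝ → X) {c d : ℝ} (hc : c ∈ Icc (0 : ℝ) 1)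
    (hd : d ∈ Icc (0 : ℝ) 1) : MapsTo (subpath γ c d) (Icc 0 1) (γ '' Icc 0 1) := by
  rw [mapsTo_iff_image_subset, image_subpath]
  exact image_mono (uIcc_subset_Icc hc hd)

theorem rev_eq_subpath (γ : ℝ → X) : rev γ = subpath γ 1 0 := by
  ext t
  simp only [rev, subpath, Function.comp_apply, AffineMap.lineMap_apply_ring']
  congr 1
  ring

@[simp] theorem concat_zero (f g : ℝ → X) : concat f g 0 = f 0 := by
  simp [concat]

@[simp] theorem concat_one (f g : ℝ → X) : concat f g 1 = g 1 := by
  norm_num [concat]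

theorem eqOn_concat_left (f g : ℝ → X) :
    EqOn (concat f g) (f ∘ (2 * ·)) (Icc 0 (1 / 2)) := fun _ ht => if_pos ht.2

theorem eqOn_concat_right {f g : ℝ → X} (hfg : f 1 = g 0) :
    EqOn (concat f g) (g ∘ (2 * · - 1)) (Icc (1 / 2) 1) := by
  intro t ht
  rcases ht.1.eq_or_lt with rfl | h
  · norm_num [concat, hfg]
  · simp only [concat, if_neg (not_le.2 h), Function.comp_apply]

theorem image_two_mul_Icc : (2 * ·) '' Icc (0 : ℝ) (1 / 2) = Icc 0 1 := by
  rw [image_mul_left_Icc zero_le_two (by norm_num)]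
  norm_num

theorem image_two_mul_sub_one_Icc : (2 * · - 1) '' Icc (1 / 2 : ℝ) 1 = Icc 0 1 := by
  simp only [sub_eq_add_neg, image_affine_Icc' (two_pos : (0 : ℝ) < 2)]
  norm_num

theorem concat_mapsTo {f g : ℝ → X} {s : Set X} (hf : MapsTo f (Icc 0 1) s)
    (hg : MapsTo g (Icc 0 1) s) : MapsTo (concat f g) (Icc 0 1) s := by
  intro t ht
  by_cases h : t ≤ 1 / 2
  · rw [eqOn_concat_left f g ⟨ht.1, h⟩]
    exact hf (image_two_mul_Icc ▸ mem_image_of_mem _ ⟨ht.1, h⟩)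
  · simp only [concat, if_neg h]
    exact hg (image_two_mul_sub_one_Icc ▸
      mem_image_of_mem (2 * · - 1) ⟨(not_le.1 h).le, ht.2⟩)

variable [MetricSpace X]

theorem edist_le_curveLen (γ : ℝ → X) : edist (γ 0) (γ 1) ≤ curveLen γ :=
  eVariationOn.edist_le γ (left_mem_Icc.2 zero_le_one) (right_mem_Icc.2 zero_le_one)

theorem eq_of_curveLen_eq_zero {γ : ℝ → X} (h : curveLen γ = 0) {t : ℝ}
    (ht : t ∈ Icc (0 : ℝ) 1) : γ t = γ 0 :=
  edist_eq_zero.1 <| (eVariationOn.eq_zero_iff γ).1 h t ht 0 (left_mem_Icc.2 zero_le_one)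

theorem IsCurve.subpath {γ : ℝ → X} (hγ : IsCurve γ) {c d : ℝ} (hc : c ∈ Icc (0 : ℝ) 1)
    (hd : d ∈ Icc (0 : ℝ) 1) : IsCurve (subpath γ c d) := by
  refine hγ.comp AffineMap.lineMap_continuous.continuousOn ?_
  rw [mapsTo_iff_image_subset, image_lineMap_Icc]
  exact uIcc_subset_Icc hc hd

theorem curveLen_subpath (γ : ℝ → X) (c d : ℝ) :
    curveLen (subpath γ c d) = eVariationOn γ (uIcc c d) := by
  rw [curveLen, subpath, ← image_lineMap_Icc]
  rcases le_total c d with h | h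
  · exact eVariationOn.comp_eq_of_monotoneOn γ _ ((AffineMap.lineMap_mono h).monotoneOn _)
  · exact eVariationOn.comp_eq_of_antitoneOn γ _ ((AffineMap.lineMap_anti h).antitoneOn _)

theorem IsCurve.rev {γ : ℝ → X} (hγ : IsCurve γ) : IsCurve (rev γ) :=
  rev_eq_subpath γ ▸ hγ.subpath (right_mem_Icc.2 zero_le_one) (left_mem_Icc.2 zero_le_one)

theorem curveLen_rev (γ : ℝ → X) : curveLen (rev γ) = curveLen γ := by
  rw [rev_eq_subpath, curveLen_subpath, uIcc_of_ge zero_le_one, curveLen]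

theorem IsCurve.concat {f g : ℝ → X} (hf : IsCurve f) (hg : IsCurve g) (hfg : f 1 = g 0) :
    IsCurve (OGC.concat f g) := by
  have hleft : ContinuousOn (OGC.concat f g) (Icc 0 (1 / 2)) := by
    refine ContinuousOn.congr ?_ (eqOn_concat_left f g)
    exact hf.comp (continuous_const_mul 2).continuousOn
      (mapsTo_iff_image_subset.2 image_two_mul_Icc.le)
  have hright : ContinuousOn (OGC.concat f g) (Icc (1 / 2) 1) := by
    refine ContinuousOn.congr ?_ (eqOn_concat_right hfg)
    exact hg.comp ((continuous_const_mul 2).sub continuous_const).continuousOn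
      (mapsTo_iff_image_subset.2 image_two_mul_sub_one_Icc.le)
  rw [IsCurve, ← Icc_union_Icc_eq_Icc (by norm_num) (by norm_num : (1 / 2 : ℝ) ≤ 1)]
  exact hleft.union_of_isClosed hright isClosed_Icc isClosed_Icc

theorem curveLen_concat {f g : ℝ → X} (hfg : f 1 = g 0) :
    curveLen (concat f g) = curveLen f + curveLen g := by
  rw [curveLen, ← eVariationOn_Icc_add_Icc _ (by norm_num) (by norm_num : (1 / 2 : ℝ) ≤ 1),
    eVariationOn.eq_of_eqOn (eqOn_concat_left f g),
    eVariationOn.eq_of_eqOn (eqOn_concat_right hfg),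
    eVariationOn.comp_eq_of_monotoneOn f _ ((monotone_mul_left_of_nonneg zero_le_two).monotoneOn _),
    eVariationOn.comp_eq_of_monotoneOn g _ ?_, image_two_mul_Icc, image_two_mul_sub_one_Icc]
  · rfl
  · exact fun a _ b _ hab => by linarith

theorem exists_arc_le_half {σ : ℝ → X} (hσ : IsCurve σ) (hσloop : σ 1 = σ 0) {s u : ℝ}
    (hs : s ∈ Icc (0 : ℝ) 1) (hu : u ∈ Icc (0 : ℝ) 1) :
    ∃ τ : ℝ → X, IsCurve τ ∧ τ 0 = σ s ∧ τ 1 = σ u ∧ MapsTo τ (Icc 0 1) (σ '' Icc 0 1) ∧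
      curveLen τ ≤ curveLen σ / 2 := by
  wlog hsu : s ≤ u generalizing s u
  · obtain ⟨τ, hτ, hτ0, hτ1, hτσ, hτlen⟩ := this hu hs (le_of_not_ge hsu)
    refine ⟨rev τ, hτ.rev, by simpa [rev] using hτ1, by simpa [rev] using hτ0, ?_,
      (curveLen_rev τ).trans_le hτlen⟩
    rw [rev_eq_subpath]
    exact (mapsTo_subpath τ (right_mem_Icc.2 zero_le_one)
      (left_mem_Icc.2 zero_le_one)).mono_right hτσ.image_subset
  -- `σ` is cut at `s` and `u` into the arc `[s, u]` and the arc through the base point.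
  have hjoin : subpath σ s 0 1 = subpath σ 1 u 0 := by simp [hσloop]
  have hsum : curveLen (subpath σ s u) + curveLen (concat (subpath σ s 0) (subpath σ 1 u)) =
      curveLen σ := by
    rw [curveLen_concat hjoin, curveLen_subpath, curveLen_subpath, curveLen_subpath,
      uIcc_of_le hsu, uIcc_of_ge hs.1, uIcc_of_ge hu.2, add_left_comm, ← add_assoc,
      eVariationOn_Icc_add_Icc _ hs.1 hsu,
      eVariationOn_Icc_add_Icc _ (hs.1.trans hsu) hu.2, curveLen]
  have hzero : (0 : ℝ) ∈ Icc (0 : ℝ) 1 := left_mem_Icc.2 zero_le_one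
  have hone : (1 : ℝ) ∈ Icc (0 : ℝ) 1 := right_mem_Icc.2 zero_le_one
  have le_half {a b : ℝ≥0∞} (hab : a ≤ b) (h : a + b = curveLen σ) : a ≤ curveLen σ / 2 := by
    rw [ENNReal.le_div_iff_mul_le (Or.inl two_ne_zero) (Or.inl ENNReal.ofNat_ne_top), mul_two,
      ← h]
    exact add_le_add_right hab a
  rcases le_total (curveLen (subpath σ s u)) (curveLen (concat (subpath σ s 0) (subpath σ 1 u)))
    with h | h
  · exact ⟨_, hσ.subpath hs hu, subpath_zero σ s u, subpath_one σ s u,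
      mapsTo_subpath σ hs hu, le_half h hsum⟩
  · exact ⟨_, (hσ.subpath hs hzero).concat (hσ.subpath hone hu) hjoin, by simp, by simp,
      concat_mapsTo (mapsTo_subpath σ hs hzero) (mapsTo_subpath σ hone hu),
      le_half h ((add_comm _ _).trans hsum)⟩

section Exit

variable {Δ : Set X} {γ : ℝ → X} {t₀ : ℝ}

theorem exists_first_exit (hΔ : IsClosed Δ) (hγ : IsCurve γ) (h0 : γ 0 ∈ Δ)
    (ht₀ : t₀ ∈ Icc (0 : ℝ) 1) (hγt₀ : γ t₀ ∉ Δ) :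
    ∃ a ∈ Icc 0 t₀, γ a ∈ frontier Δ ∧ MapsTo γ (Icc 0 a) Δ := by
  have hγ' : ContinuousOn γ (Icc 0 t₀) := hγ.mono (Icc_subset_Icc_right ht₀.2)
  set K := Icc 0 t₀ ∩ γ ⁻¹' frontier Δ
  have hK : ∀ s ∈ Icc 0 t₀, γ s ∉ Δ → ∃ s' ∈ K, s' ≤ s := fun s hs hγs => by
    obtain ⟨s', hs', hfr⟩ := exists_mem_frontier_of_continuousOn hs.1
      (hγ'.mono (Icc_subset_Icc_right hs.2)) h0 hγs
    exact ⟨s', ⟨⟨hs'.1, hs'.2.trans hs.2⟩, hfr⟩, hs'.2⟩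
  have hKbdd : BddBelow K := ⟨0, fun _ h => h.1.1⟩
  obtain ⟨s₀, hs₀, -⟩ := hK t₀ (right_mem_Icc.2 ht₀.1) hγt₀
  have hKclosed : IsClosed K :=
    hγ'.preimage_isClosed_of_isClosed isClosed_Icc isClosed_frontier
  have ha : sInf K ∈ K := hKclosed.csInf_mem ⟨s₀, hs₀⟩ hKbdd
  refine ⟨sInf K, ha.1, ha.2, fun s hs => ?_⟩
  by_contra hγs
  obtain ⟨s', hs', hs's⟩ := hK s ⟨hs.1, hs.2.trans ha.1.2⟩ hγs
  have : s = sInf K := le_antisymm hs.2 ((csInf_le hKbdd hs').trans hs's)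
  exact hγs (this ▸ hΔ.frontier_subset ha.2)

theorem exists_last_entry (hΔ : IsClosed Δ) (hγ : IsCurve γ) (h1 : γ 1 ∈ Δ)
    (ht₀ : t₀ ∈ Icc (0 : ℝ) 1) (hγt₀ : γ t₀ ∉ Δ) :
    ∃ b ∈ Icc t₀ 1, γ b ∈ frontier Δ ∧ MapsTo γ (Icc b 1) Δ := by
  obtain ⟨a, ha, hfr, hmaps⟩ := exists_first_exit hΔ hγ.rev (by simpa [rev] using h1)
    (t₀ := 1 - t₀) ⟨by linarith [ht₀.2], by linarith [ht₀.1]⟩ (by simpa [rev] using hγt₀)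
  refine ⟨1 - a, ⟨by linarith [ha.2], by linarith [ha.1]⟩, hfr, fun s hs => ?_⟩
  simpa [rev] using hmaps (x := 1 - s) ⟨by linarith [hs.2], by linarith [hs.1]⟩

end Exit

theorem exists_curve_mapsTo_le_curveLen_add_half {Δ : Set X} (hΔ : IsClosed Δ) {σ : ℝ → X}
    (hσ : IsCurve σ) (hσloop : σ 1 = σ 0) (hfr : frontier Δ ⊆ σ '' Icc 0 1)
    (hσΔ : σ '' Icc 0 1 ⊆ Δ) {γ : ℝ → X} (hγ : IsCurve γ) (h0 : γ 0 ∈ Δ) (h1 : γ 1 ∈ Δ) :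
    ∃ γ' : ℝ → X, IsCurve γ' ∧ MapsTo γ' (Icc 0 1) Δ ∧ γ' 0 = γ 0 ∧ γ' 1 = γ 1 ∧
      curveLen γ' ≤ curveLen γ + curveLen σ / 2 := by
  by_cases hin : MapsTo γ (Icc 0 1) Δ
  · exact ⟨γ, hγ, hin, rfl, rfl, le_self_add⟩
  obtain ⟨t₀, ht₀, hγt₀⟩ : ∃ t₀ ∈ Icc (0 : ℝ) 1, γ t₀ ∉ Δ := by
    simpa only [MapsTo, not_forall, exists_prop] using hin
  obtain ⟨a, ha, hγa, hpre⟩ := exists_first_exit hΔ hγ h0 ht₀ hγt₀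
  obtain ⟨b, hb, hγb, hpost⟩ := exists_last_entry hΔ hγ h1 ht₀ hγt₀
  obtain ⟨sa, hsa, hσa⟩ := hfr hγa
  obtain ⟨sb, hsb, hσb⟩ := hfr hγb
  obtain ⟨τ, hτ, hτ0, hτ1, hτσ, hτlen⟩ := exists_arc_le_half hσ hσloop hsa hsb
  have hzero : (0 : ℝ) ∈ Icc (0 : ℝ) 1 := left_mem_Icc.2 zero_le_one
  have hone : (1 : ℝ) ∈ Icc (0 : ℝ) 1 := right_mem_Icc.2 zero_le_one
  have haI : a ∈ Icc (0 : ℝ) 1 := ⟨ha.1, ha.2.trans ht₀.2⟩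
  have hbI : b ∈ Icc (0 : ℝ) 1 := ⟨ht₀.1.trans hb.1, hb.2⟩
  have hj₁ : subpath γ 0 a 1 = τ 0 := by simp [hτ0, hσa]
  have hj₂ : concat (subpath γ 0 a) τ 1 = subpath γ b 1 0 := by simp [hτ1, hσb]
  refine ⟨concat (concat (subpath γ 0 a) τ) (subpath γ b 1),
    ((hγ.subpath hzero haI).concat hτ hj₁).concat (hγ.subpath hbI hone) hj₂,
    concat_mapsTo (concat_mapsTo ?_ (hτσ.mono_right hσΔ)) ?_, by simp, by simp, ?_⟩
  · rw [mapsTo_iff_image_subset, image_subpath, uIcc_of_le ha.1]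
    exact hpre.image_subset
  · rw [mapsTo_iff_image_subset, image_subpath, uIcc_of_le hb.2]
    exact hpost.image_subset
  have houter : eVariationOn γ (Icc 0 a) + eVariationOn γ (Icc b 1) ≤ curveLen γ :=
    (eVariationOn.add_le_union γ fun x hx y hy => hx.2.trans (ha.2.trans (hb.1.trans hy.1))).trans
      (eVariationOn.mono γ
        (union_subset (Icc_subset_Icc_right haI.2) (Icc_subset_Icc_left hbI.1)))
  rw [curveLen_concat hj₂, curveLen_concat hj₁, curveLen_subpath, curveLen_subpath,
    uIcc_of_le ha.1, uIcc_of_le hb.2, add_right_comm]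
  exact add_le_add houter hτlen

end OGC

open OGC in
theorem statement13_general {N : Type*} [MetricSpace N]
    [ChartedSpace (EuclideanSpace ℝ (Fin 2)) N]
    (D : ℝ) (hD : ∀ x y : N, ∃ γ : ℝ → N, IsCurve γ ∧ γ 0 = x ∧ γ 1 = y ∧
      curveLen γ ≤ ENNReal.ofReal D)
    (Δ : Set N) (hΔclosed : IsClosed Δ)
    (hdisk : Nonempty (Δ ≃ₜ Metric.closedBall (0 : EuclideanSpace ℝ (Fin 2)) 1))
    (σ : ℝ → N) (hσ : IsCurve σ) (hσloop : σ 1 = σ 0)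
    (hσbd : σ '' Set.Icc 0 1 = frontier Δ)
    (ℓ : ℝ) (hℓ : curveLen σ = ENNReal.ofReal ℓ) :
    ∀ x ∈ Δ, ∀ y ∈ Δ, ∃ γ : ℝ → N, IsCurve γ ∧ (∀ t ∈ Set.Icc (0:ℝ) 1, γ t ∈ Δ) ∧
      γ 0 = x ∧ γ 1 = y ∧ curveLen γ ≤ ENNReal.ofReal (D + ℓ / 2) := by
  intro x hx y hy
  obtain ⟨e⟩ := hdisk
  have hnt : Δ.Nontrivial := nontrivial_of_homeomorph_closedBall one_pos e
  have hD0 : 0 ≤ D := by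
    obtain ⟨q₁, -, q₂, -, hq⟩ := hnt
    obtain ⟨γ, -, rfl, rfl, hγD⟩ := hD q₁ q₂
    exact (ENNReal.ofReal_pos.1
      ((edist_pos.2 hq).trans_le ((edist_le_curveLen γ).trans hγD))).le
  have hℓ0 : 0 ≤ ℓ := by
    by_contra! hneg
    have hpoint : σ '' Icc 0 1 = {σ 0} :=
      ((nonempty_Icc.2 zero_le_one).image σ).subset_singleton_iff.1 <| image_subset_iff.2
        fun t ht => eq_of_curveLen_eq_zero (hℓ.trans (ENNReal.ofReal_eq_zero.2 hneg.le)) ht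
    refine frontier_ne_singleton (E := EuclideanSpace ℝ (Fin 2)) ?_ hΔclosed
      (isPreconnected_of_homeomorph_closedBall e) hnt (σ 0) (hσbd ▸ hpoint)
    rw [← Module.finrank_eq_rank, finrank_euclideanSpace_fin]
    norm_num
  obtain ⟨γ, hγ, rfl, rfl, hγD⟩ := hD x y
  obtain ⟨γ', hγ', hγ'Δ, h0, h1, hlen⟩ := exists_curve_mapsTo_le_curveLen_add_half hΔclosed hσ
    hσloop hσbd.ge (hσbd ▸ hΔclosed.frontier_subset) hγ hx hy
  refine ⟨γ', hγ', hγ'Δ, h0, h1, hlen.trans ?_⟩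
  calc curveLen γ + curveLen σ / 2 ≤ ENNReal.ofReal D + ENNReal.ofReal (ℓ / 2) := by
        rw [hℓ, ENNReal.ofReal_div_of_pos two_pos, ENNReal.ofReal_ofNat]
        exact add_le_add_left hγD _
    _ = ENNReal.ofReal (D + ℓ / 2) := (ENNReal.ofReal_add hD0 (by positivity)).symm

open OGC in
/-- Let `Δ` be a 2-disk contained in a closed Riemannian surface `N`
of intrinsic diameter `D` (any two points are joined by a curve of length at most `D`),
and let `∂Δ` be parameterized by a closed curve `σ` of length `ℓ`. Then the intrinsic
diameter of `Δ` is at most `D + ℓ/2`: any two points of `Δ` are joined by a curve in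
`Δ` of length at most `D + ℓ/2`. -/
theorem statement13 {N : Type*} [MetricSpace N] [CompactSpace N]
    [ChartedSpace (EuclideanSpace ℝ (Fin 2)) N]
    (D : ℝ) (hD : ∀ x y : N, ∃ γ : ℝ → N, IsCurve γ ∧ γ 0 = x ∧ γ 1 = y ∧
      curveLen γ ≤ ENNReal.ofReal D)
    (Δ : Set N) (hΔclosed : IsClosed Δ)
    (hdisk : Nonempty (Δ ≃ₜ Metric.closedBall (0 : EuclideanSpace ℝ (Fin 2)) 1))
    (σ : ℝ → N) (hσ : IsCurve σ) (hσloop : σ 1 = σ 0)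
    (hσbd : σ '' Set.Icc 0 1 = frontier Δ)
    (ℓ : ℝ) (hℓ : curveLen σ = ENNReal.ofReal ℓ) :
    ∀ x ∈ Δ, ∀ y ∈ Δ, ∃ γ : ℝ → N, IsCurve γ ∧ (∀ t ∈ Set.Icc (0:ℝ) 1, γ t ∈ Δ) ∧
      γ 0 = x ∧ γ 1 = y ∧ curveLen γ ≤ ENNReal.ofReal (D + ℓ / 2) :=
  statement13_general D hD Δ hΔclosed hdisk σ hσ hσloop hσbd ℓ hℓ
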